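/- arXiv:2305.15490 — 2 statements merged into one kernel-verified Lean document; each statement's English description precedes it below -/
import Mathlib

section
/- Let g : ℝ^r → ℝ^n be a C² immersion and define Γ : ℝ^{2r} → ℝ^{2n} by Γ(q̃, p̃) = (g(q̃), p_ref + ((Dg|_{q̃})⁺)ᵀ p̃) where (Dg|_{q̃})⁺ = ((Dg|_{q̃})ᵀ Dg|_{q̃})⁻¹ (Dg|_{q̃})ᵀ is the Moore–Penrose inverse and p_ref ∈ ℝ^n is a constant. Then the Jacobian of Γ at every point (q̃, p̃) is a symplectic matrix: (DΓ)ᵀ J₂ₙ DΓ = J₂ᵣ. -/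
/-!
Write `A = Dg(q̃)` and `F = ((Dg|_{q̃})⁺)ᵀ = A (AᵀA)⁻¹`. The Jacobian of `Γ` is lower block
triangular, `[[A, 0], [C, F]]` with `C = D_{q̃}(F p̃)`, and such a matrix is symplectic as soon as
`AᵀF = I` and `AᵀC` is symmetric. The first identity says that `A⁺` is a left inverse of `A`.
Differentiating `Aᵀ F p̃ = p̃` in `q̃` gives `AᵀC = -D_{q̃}(Aᵀ w)` with `w = F p̃` held fixed, and
`D_{q̃}(Aᵀ w)` is the Hessian of `q̃ ↦ ⟨w, g(q̃)⟩`, which is symmetric because `g` is `C²`.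
-/

open Matrix

/-- The canonical symplectic matrix `J₂ₙ = [[0, Iₙ], [-Iₙ, 0]]`. -/
noncomputable def symplJ (n : ℕ) : Matrix (Fin n ⊕ Fin n) (Fin n ⊕ Fin n) ℝ :=
  Matrix.fromBlocks 0 1 (-1) 0

/-- The Jacobian matrix of a map between finite pi spaces over ℝ. -/
noncomputable def jacobian {κ ι : Type*} [Fintype κ] [DecidableEq κ] [Fintype ι]
    (f : (κ → ℝ) → (ι → ℝ)) (x : κ → ℝ) : Matrix ι κ ℝ :=
  fun i j => fderiv ℝ f x (Pi.single j 1) i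

/-- Moore–Penrose inverse of a full-column-rank matrix. -/
noncomputable def mpinv {m k : Type*} [Fintype m] [Fintype k] [DecidableEq k]
    (A : Matrix m k ℝ) : Matrix k m ℝ :=
  (Aᵀ * A)⁻¹ * Aᵀ

/-- The manifold cotangent lift embedding `Γ(q̃, p̃) = (g(q̃), p_ref + ((Dg|_{q̃})⁺)ᵀ p̃)`,
with the state written as a function on `Fin r ⊕ Fin r`. -/
noncomputable def MCL {n r : ℕ} (g : (Fin r → ℝ) → (Fin n → ℝ)) (pref : Fin n → ℝ) :
    (Fin r ⊕ Fin r → ℝ) → (Fin n ⊕ Fin n → ℝ) :=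
  fun w => Sum.elim (g (w ∘ Sum.inl))
    (pref + (mpinv (jacobian g (w ∘ Sum.inl)))ᵀ *ᵥ (w ∘ Sum.inr))

section MatrixDifferentiability

variable {𝕜 E : Type*} [NontriviallyNormedField 𝕜] [NormedAddCommGroup E] [NormedSpace 𝕜 E]
  {x : E}

lemma differentiableAt_det {k : Type*} [Fintype k] [DecidableEq k] {M : E → Matrix k k 𝕜}
    (hM : ∀ i j, DifferentiableAt 𝕜 (fun y => M y i j) x) :
    DifferentiableAt 𝕜 (fun y => (M y).det) x := by
  simp only [det_apply']
  exact .fun_sum fun σ _ => .const_mul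
    (HasFDerivAt.finsetProd fun i _ => (hM (σ i) i).hasFDerivAt).differentiableAt _

lemma differentiableAt_adjugate_apply {k : Type*} [Fintype k] [DecidableEq k]
    {M : E → Matrix k k 𝕜}
    (hM : ∀ i j, DifferentiableAt 𝕜 (fun y => M y i j) x) (i j : k) :
    DifferentiableAt 𝕜 (fun y => (M y).adjugate i j) x := by
  simp only [adjugate_apply]
  refine differentiableAt_det fun a b => ?_
  simp only [updateRow_apply]
  split_ifs
  · exact differentiableAt_const _
  · exact hM a b

lemma differentiableAt_inv_apply {k : Type*} [Fintype k] [DecidableEq k]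
    {M : E → Matrix k k 𝕜}
    (hM : ∀ i j, DifferentiableAt 𝕜 (fun y => M y i j) x) (hdet : (M x).det ≠ 0) (i j : k) :
    DifferentiableAt 𝕜 (fun y => (M y)⁻¹ i j) x := by
  simp only [inv_def, Ring.inverse_eq_inv', Matrix.smul_apply, smul_eq_mul]
  exact ((differentiableAt_det hM).inv hdet).mul (differentiableAt_adjugate_apply hM i j)

lemma differentiableAt_mul_apply {l m k : Type*} [Fintype m] {M : E → Matrix l m 𝕜}
    {N : E → Matrix m k 𝕜}
    (hM : ∀ i j, DifferentiableAt 𝕜 (fun y => M y i j) x)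
    (hN : ∀ i j, DifferentiableAt 𝕜 (fun y => N y i j) x) (i : l) (j : k) :
    DifferentiableAt 𝕜 (fun y => (M y * N y) i j) x := by
  simp only [mul_apply]
  exact .fun_sum fun c _ => (hM i c).mul (hN c j)

lemma differentiableAt_mulVec {ι ι' : Type*} [Fintype ι'] {M : E → Matrix ι ι' 𝕜}
    {v : E → ι' → 𝕜}
    (hM : ∀ i j, DifferentiableAt 𝕜 (fun y => M y i j) x) (hv : DifferentiableAt 𝕜 v x) :
    DifferentiableAt 𝕜 (fun y => M y *ᵥ v y) x :=
  differentiableAt_pi.2 fun i =>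
    .fun_sum fun k _ => (hM i k).mul (differentiableAt_pi.1 hv k)

end MatrixDifferentiability

lemma differentiableAt_mpinv_apply {E : Type*} [NormedAddCommGroup E] [NormedSpace ℝ E] {x : E}
    {m k : Type*} [Fintype m] [Fintype k] [DecidableEq k]
    {M : E → Matrix m k ℝ}
    (hM : ∀ i j, DifferentiableAt ℝ (fun y => M y i j) x) (hdet : ((M x)ᵀ * M x).det ≠ 0)
    (i : k) (j : m) :
    DifferentiableAt ℝ (fun y => mpinv (M y) i j) x :=
  differentiableAt_mul_apply
    (differentiableAt_inv_apply (differentiableAt_mul_apply (fun i j => hM j i) hM) hdet)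
    (fun i j => hM j i) i j

lemma isUnit_of_rank_eq_card {K k : Type*} [Field K] [Fintype k] [DecidableEq k] {S : Matrix k k K}
    (h : S.rank = Fintype.card k) : IsUnit S := by
  rw [← Matrix.mulVec_surjective_iff_isUnit, ← Matrix.coe_mulVecLin, ← LinearMap.range_eq_top]
  apply Submodule.eq_top_of_finrank_eq
  rw [← Matrix.rank, h, Module.finrank_fintype_fun_eq_card]

lemma isUnit_det_transpose_mul_self {m k : Type*} [Fintype m] [Fintype k] [DecidableEq k]
    {A : Matrix m k ℝ} (h : A.rank = Fintype.card k) : IsUnit (Aᵀ * A).det :=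
  (isUnit_iff_isUnit_det _).mp (isUnit_of_rank_eq_card (by rw [rank_transpose_mul_self, h]))

lemma mpinv_mul_self {m k : Type*} [Fintype m] [Fintype k] [DecidableEq k]
    {A : Matrix m k ℝ} (h : IsUnit (Aᵀ * A).det) : mpinv A * A = 1 := by
  rw [mpinv, Matrix.mul_assoc, nonsing_inv_mul _ h]

section Jacobian

variable {κ κ' ι ι' : Type*} [Fintype κ] [DecidableEq κ] [Fintype κ'] [DecidableEq κ']
  [Fintype ι] [Fintype ι']

lemma jacobian_eq_toMatrix' (f : (κ → ℝ) → ι → ℝ) (x : κ → ℝ) :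
    jacobian f x = LinearMap.toMatrix' (fderiv ℝ f x : (κ → ℝ) →ₗ[ℝ] ι → ℝ) := by
  ext i j
  rw [LinearMap.toMatrix'_apply]
  rfl

lemma jacobian_apply_eq_fderiv {f : (κ → ℝ) → ι → ℝ} {x : κ → ℝ} (hf : DifferentiableAt ℝ f x)
    (i : ι) (j : κ) : jacobian f x i j = fderiv ℝ (fun y => f y i) x (Pi.single j 1) := by
  rw [jacobian, fderiv_pi (differentiableAt_pi.1 hf)]
  rfl

lemma jacobian_id (x : κ → ℝ) : jacobian (fun y => y) x = 1 := by
  rw [jacobian_eq_toMatrix', fderiv_fun_id]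
  exact LinearMap.toMatrix'_id

lemma jacobian_const (c : ι → ℝ) (x : κ → ℝ) : jacobian (fun _ => c) x = 0 := by
  ext i j
  rw [jacobian, fderiv_const_apply]
  rfl

lemma jacobian_const_add (c : ι → ℝ) (f : (κ → ℝ) → ι → ℝ) (x : κ → ℝ) :
    jacobian (fun y => c + f y) x = jacobian f x := by
  unfold jacobian
  rw [fderiv_const_add]

lemma jacobian_comp_clm {f : (κ' → ℝ) → ι → ℝ} (L : (κ → ℝ) →L[ℝ] κ' → ℝ) {x : κ → ℝ}
    (hf : DifferentiableAt ℝ f (L x)) :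
    jacobian (fun w => f (L w)) x
      = jacobian f (L x) * LinearMap.toMatrix' (L : (κ → ℝ) →ₗ[ℝ] κ' → ℝ) := by
  rw [jacobian_eq_toMatrix', jacobian_eq_toMatrix', ← LinearMap.toMatrix'_comp,
    show (fun w => f (L w)) = f ∘ L from rfl, fderiv_comp x hf L.differentiableAt, L.fderiv]
  rfl

lemma jacobian_comp_inl {f : (κ → ℝ) → ι → ℝ} {z : κ ⊕ κ' → ℝ}
    (hf : DifferentiableAt ℝ f (z ∘ Sum.inl)) :
    jacobian (fun w => f (w ∘ Sum.inl)) z = fromCols (jacobian f (z ∘ Sum.inl)) 0 := by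
  refine (jacobian_comp_clm (LinearMap.funLeft ℝ ℝ Sum.inl).toContinuousLinearMap hf).trans ?_
  ext i (j | j) <;> simp [mul_apply, Pi.single_apply, LinearMap.funLeft]

lemma jacobian_comp_inr {f : (κ' → ℝ) → ι → ℝ} {z : κ ⊕ κ' → ℝ}
    (hf : DifferentiableAt ℝ f (z ∘ Sum.inr)) :
    jacobian (fun w => f (w ∘ Sum.inr)) z = fromCols 0 (jacobian f (z ∘ Sum.inr)) := by
  refine (jacobian_comp_clm (LinearMap.funLeft ℝ ℝ Sum.inr).toContinuousLinearMap hf).trans ?_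
  ext i (j | j) <;> simp [mul_apply, Pi.single_apply, LinearMap.funLeft]

lemma jacobian_sumElim {f : (κ → ℝ) → ι → ℝ} {h : (κ → ℝ) → ι' → ℝ} {x : κ → ℝ}
    (hf : DifferentiableAt ℝ f x) (hh : DifferentiableAt ℝ h x) :
    jacobian (fun y => Sum.elim (f y) (h y)) x = fromRows (jacobian f x) (jacobian h x) := by
  have hfh : DifferentiableAt ℝ (fun y => Sum.elim (f y) (h y)) x :=
    differentiableAt_pi.2 fun
      | .inl i => differentiableAt_pi.1 hf i
      | .inr i => differentiableAt_pi.1 hh i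
  ext (i | i) j <;>
    simp only [jacobian_apply_eq_fderiv hfh, jacobian_apply_eq_fderiv hf,
      jacobian_apply_eq_fderiv hh, fromRows_apply_inl, fromRows_apply_inr, Sum.elim_inl,
      Sum.elim_inr]

lemma jacobian_mulVec_const_apply {M : (κ → ℝ) → Matrix ι ι' ℝ} {x : κ → ℝ}
    (hM : ∀ i j, DifferentiableAt ℝ (fun y => M y i j) x) (w : ι' → ℝ) (i : ι) (j : κ) :
    jacobian (fun y => M y *ᵥ w) x i j
      = ∑ k, w k * fderiv ℝ (fun y => M y i k) x (Pi.single j 1) := by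
  rw [jacobian_apply_eq_fderiv (differentiableAt_mulVec hM (differentiableAt_const w))]
  simp only [mulVec, dotProduct]
  rw [fderiv_fun_sum fun k _ => (hM i k).mul_const (w k)]
  simp [fderiv_mul_const (hM _ _)]

lemma jacobian_mulVec {M : (κ → ℝ) → Matrix ι ι' ℝ} {v : (κ → ℝ) → ι' → ℝ} {x : κ → ℝ}
    (hM : ∀ i j, DifferentiableAt ℝ (fun y => M y i j) x) (hv : DifferentiableAt ℝ v x) :
    jacobian (fun y => M y *ᵥ v y) x = jacobian (fun y => M y *ᵥ v x) x + M x * jacobian v x := by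
  ext i j
  rw [Matrix.add_apply, jacobian_mulVec_const_apply hM, mul_apply,
    jacobian_apply_eq_fderiv (differentiableAt_mulVec hM hv)]
  simp only [mulVec, dotProduct]
  rw [fderiv_fun_sum fun k _ => (hM i k).fun_mul (differentiableAt_pi.1 hv k)]
  simp [fderiv_fun_mul (hM _ _) (differentiableAt_pi.1 hv _), jacobian_apply_eq_fderiv hv,
    Finset.sum_add_distrib, add_comm]

end Jacobian

section Hessian

variable {κ ι : Type*} [Fintype κ] [DecidableEq κ] [Fintype ι] {g : (κ → ℝ) → ι → ℝ}
  {q : κ → ℝ}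

lemma hasFDerivAt_jacobian_apply (hg : DifferentiableAt ℝ (fderiv ℝ g) q) (i : ι) (j : κ) :
    HasFDerivAt (fun y => jacobian g y i j)
      ((ContinuousLinearMap.proj i ∘L ContinuousLinearMap.apply ℝ (ι → ℝ) (Pi.single j 1)) ∘L
        fderiv ℝ (fderiv ℝ g) q) q := by
  have h := ((ContinuousLinearMap.proj (R := ℝ) (φ := fun _ : ι => ℝ) i).comp
    (ContinuousLinearMap.apply ℝ (ι → ℝ) (Pi.single j 1))).hasFDerivAt.comp q hg.hasFDerivAt
  exact h

lemma differentiableAt_jacobian_apply (hg : ContDiffAt ℝ 2 g q) (i : ι) (j : κ) :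
    DifferentiableAt ℝ (fun y => jacobian g y i j) q :=
  (hasFDerivAt_jacobian_apply
    ((hg.fderiv_right (m := 1) le_rfl).differentiableAt one_ne_zero) i j).differentiableAt

lemma isSymm_jacobian_transpose_jacobian_mulVec (hg : ContDiffAt ℝ 2 g q) (w : ι → ℝ) :
    (jacobian (fun y => (jacobian g y)ᵀ *ᵥ w) q).IsSymm := by
  have hg' : DifferentiableAt ℝ (fderiv ℝ g) q :=
    (hg.fderiv_right (m := 1) le_rfl).differentiableAt one_ne_zero
  have hsymm : IsSymmSndFDerivAt ℝ g q := hg.isSymmSndFDerivAt (by simp)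
  refine IsSymm.ext fun l m => ?_
  have hA : ∀ i j, DifferentiableAt ℝ (fun y => (jacobian g y)ᵀ i j) q :=
    fun i j => differentiableAt_jacobian_apply hg j i
  rw [jacobian_mulVec_const_apply hA, jacobian_mulVec_const_apply hA]
  simp [(hasFDerivAt_jacobian_apply hg' _ _).fderiv, hsymm (Pi.single l 1) (Pi.single m 1)]

end Hessian

lemma isSymm_transpose_jacobian_mul_jacobian_mulVec {κ ι : Type*} [Fintype κ] [DecidableEq κ]
    [Fintype ι] {g : (κ → ℝ) → ι → ℝ} {F : (κ → ℝ) → Matrix ι κ ℝ} {q : κ → ℝ}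
    (hg : ContDiffAt ℝ 2 g q) (hF : ∀ i j, DifferentiableAt ℝ (fun y => F y i j) q)
    (hgF : ∀ y, (jacobian g y)ᵀ * F y = 1) (p : κ → ℝ) :
    ((jacobian g q)ᵀ * jacobian (fun y => F y *ᵥ p) q).IsSymm := by
  have hA : ∀ i j, DifferentiableAt ℝ (fun y => (jacobian g y)ᵀ i j) q :=
    fun i j => differentiableAt_jacobian_apply hg j i
  have hconst : (fun y => (jacobian g y)ᵀ *ᵥ (F y *ᵥ p)) = fun _ => p := by
    funext y
    rw [mulVec_mulVec, hgF, one_mulVec]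
  have hsum := jacobian_mulVec hA (differentiableAt_mulVec hF (differentiableAt_const p))
  rw [hconst, jacobian_const] at hsum
  rw [eq_neg_of_add_eq_zero_right hsum.symm]
  exact (isSymm_jacobian_transpose_jacobian_mulVec hg _).neg

theorem fromBlocks_transpose_mul_symplJ_mul {n r : ℕ} {A C F : Matrix (Fin n) (Fin r) ℝ}
    (hAF : Aᵀ * F = 1) (hAC : (Aᵀ * C).IsSymm) :
    (fromBlocks A 0 C F)ᵀ * symplJ n * fromBlocks A 0 C F = symplJ r := by
  have hFA : Fᵀ * A = 1 := by simpa using congrArg transpose hAF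
  have hCA : Cᵀ * A = Aᵀ * C := by simpa using hAC.eq
  rw [symplJ, symplJ, fromBlocks_transpose, fromBlocks_multiply, fromBlocks_multiply]
  simp [hAF, hFA, hCA]

lemma jacobian_MCL {n r : ℕ} {g : (Fin r → ℝ) → Fin n → ℝ} (pref : Fin n → ℝ)
    {z : Fin r ⊕ Fin r → ℝ} (hg : DifferentiableAt ℝ g (z ∘ Sum.inl))
    (hF : ∀ i j, DifferentiableAt ℝ (fun y => (mpinv (jacobian g y))ᵀ i j) (z ∘ Sum.inl)) :
    jacobian (MCL g pref) z = fromBlocks (jacobian g (z ∘ Sum.inl)) 0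
      (jacobian (fun y => (mpinv (jacobian g y))ᵀ *ᵥ (z ∘ Sum.inr)) (z ∘ Sum.inl))
      (mpinv (jacobian g (z ∘ Sum.inl)))ᵀ := by
  have hinl : DifferentiableAt ℝ (fun w : Fin r ⊕ Fin r → ℝ => w ∘ Sum.inl) z :=
    differentiableAt_pi.2 fun j => differentiableAt_apply _ _
  have hinr : DifferentiableAt ℝ (fun w : Fin r ⊕ Fin r → ℝ => w ∘ Sum.inr) z :=
    differentiableAt_pi.2 fun j => differentiableAt_apply _ _
  have hFw : ∀ i j, DifferentiableAt ℝ
      (fun w : Fin r ⊕ Fin r → ℝ => (mpinv (jacobian g (w ∘ Sum.inl)))ᵀ i j) z :=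
    fun i j => (hF i j).comp (f := fun w => w ∘ Sum.inl) z hinl
  have hgw : DifferentiableAt ℝ (fun w : Fin r ⊕ Fin r → ℝ => g (w ∘ Sum.inl)) z := hg.comp z hinl
  unfold MCL
  rw [jacobian_sumElim hgw ((differentiableAt_mulVec hFw hinr).const_add pref),
    jacobian_const_add, jacobian_mulVec hFw hinr, jacobian_comp_inl hg,
    jacobian_comp_inl (differentiableAt_mulVec hF (differentiableAt_const _)),
    jacobian_comp_inr (f := fun y => y) differentiableAt_fun_id, jacobian_id]
  ext (i | i) (j | j) <;> simp

theorem MCL_is_symplectic_map (n r : ℕ)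
    (g : (Fin r → ℝ) → (Fin n → ℝ)) (hg : ContDiff ℝ 2 g)
    (himm : ∀ q : Fin r → ℝ, (jacobian g q).rank = r)
    (pref : Fin n → ℝ) (z : Fin r ⊕ Fin r → ℝ) :
    (jacobian (MCL g pref) z)ᵀ * symplJ n * jacobian (MCL g pref) z = symplJ r := by
  have hdet : ∀ y, IsUnit ((jacobian g y)ᵀ * jacobian g y).det := fun y =>
    isUnit_det_transpose_mul_self (by rw [himm, Fintype.card_fin])
  have hgF : ∀ y, (jacobian g y)ᵀ * (mpinv (jacobian g y))ᵀ = 1 := fun y => by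
    rw [← transpose_mul, mpinv_mul_self (hdet y), transpose_one]
  have hF : ∀ i j, DifferentiableAt ℝ (fun y => (mpinv (jacobian g y))ᵀ i j) (z ∘ Sum.inl) :=
    fun i j => differentiableAt_mpinv_apply (differentiableAt_jacobian_apply hg.contDiffAt)
      (hdet _).ne_zero j i
  rw [jacobian_MCL pref (hg.differentiable two_ne_zero _) hF]
  exact fromBlocks_transpose_mul_symplJ_mul (hgF _)
    (isSymm_transpose_jacobian_mul_jacobian_mulVec hg.contDiffAt hF hgF _)
end

section
/- Let f : ℝ^{2r} → ℝ^{2n} be a C¹ map whose Jacobian Df|_z is a symplectic matrix for every z (i.e., (Df|_z)ᵀ J₂ₙ Df|_z = J₂ᵣ). Define the reduced vector field F(z) := (Df|_z)⁺ J₂ₙ ∇H(f(z)), where (Df|_z)⁺ = J₂ᵣᵀ (Df|_z)ᵀ J₂ₙ and H : ℝ^{2n} → ℝ is C¹. Then F(z) = J₂ᵣ ∇(H ∘ f)(z); that is, the symplectic-manifold-Galerkin reduction of a canonical Hamiltonian vector field is a canonical Hamiltonian vector field with Hamiltonian H ∘ f. -/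
/-! Since `J² = -1` and `Jᵀ = -J`, the reduced field equals `J₂ᵣ (Df|_z)ᵀ ∇H(f z)`, and
`(Df|_z)ᵀ ∇H(f z) = ∇(H ∘ f)(z)` is the chain rule. -/

open Matrix

/-- Gradient of a scalar function on a finite pi space over ℝ. -/
noncomputable def grad {ι : Type*} [Fintype ι] [DecidableEq ι]
    (H : (ι → ℝ) → ℝ) (y : ι → ℝ) : ι → ℝ :=
  fun i => fderiv ℝ H y (Pi.single i 1)

theorem symplJ_eq_neg_J (n : ℕ) : symplJ n = -J (Fin n) ℝ := by
  ext (i|i) (j|j) <;> simp [symplJ, Matrix.J]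

theorem symplJ_mul_self (n : ℕ) : symplJ n * symplJ n = -1 := by
  rw [symplJ_eq_neg_J, neg_mul_neg, J_squared]

theorem symplJ_transpose (n : ℕ) : (symplJ n)ᵀ = -symplJ n := by
  rw [symplJ_eq_neg_J, transpose_neg, J_transpose]

theorem fderiv_apply_eq_grad_dotProduct {ι : Type*} [Fintype ι] [DecidableEq ι]
    (H : (ι → ℝ) → ℝ) (y v : ι → ℝ) : fderiv ℝ H y v = grad H y ⬝ᵥ v := by
  conv_lhs => rw [pi_eq_sum_univ' v]
  simp [grad, dotProduct, mul_comm]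

theorem grad_comp {κ ι : Type*} [Fintype κ] [DecidableEq κ] [Fintype ι] [DecidableEq ι]
    {f : (κ → ℝ) → (ι → ℝ)} {H : (ι → ℝ) → ℝ} {z : κ → ℝ}
    (hf : DifferentiableAt ℝ f z) (hH : DifferentiableAt ℝ H (f z)) :
    grad (H ∘ f) z = (jacobian f z)ᵀ *ᵥ grad H (f z) := by
  funext j
  rw [grad, fderiv_comp z hH hf, ContinuousLinearMap.comp_apply,
    fderiv_apply_eq_grad_dotProduct, mulVec, dotProduct_comm]
  rfl

theorem symplJ_transpose_mul_mul_symplJ_mul_symplJ {m n : ℕ}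
    (A : Matrix (Fin m ⊕ Fin m) (Fin n ⊕ Fin n) ℝ) :
    (symplJ m)ᵀ * A * symplJ n * symplJ n = symplJ m * A := by
  rw [Matrix.mul_assoc, symplJ_mul_self, symplJ_transpose, Matrix.mul_neg, Matrix.mul_one,
    Matrix.neg_mul, neg_neg]

theorem SMG_projection_is_Hamiltonian_general (n r : ℕ)
    (f : (Fin r ⊕ Fin r → ℝ) → (Fin n ⊕ Fin n → ℝ)) (hf : ContDiff ℝ 1 f)
    (H : (Fin n ⊕ Fin n → ℝ) → ℝ) (hH : ContDiff ℝ 1 H)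
    (z : Fin r ⊕ Fin r → ℝ) :
    ((symplJ r)ᵀ * (jacobian f z)ᵀ * symplJ n) *ᵥ (symplJ n *ᵥ grad H (f z)) =
      symplJ r *ᵥ grad (H ∘ f) z := by
  rw [grad_comp (hf.differentiable one_ne_zero z) (hH.differentiable one_ne_zero (f z)),
    mulVec_mulVec, symplJ_transpose_mul_mul_symplJ_mul_symplJ, mulVec_mulVec]

theorem SMG_projection_is_Hamiltonian (n r : ℕ)
    (f : (Fin r ⊕ Fin r → ℝ) → (Fin n ⊕ Fin n → ℝ)) (hf : ContDiff ℝ 1 f)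
    (hsympl : ∀ z, (jacobian f z)ᵀ * symplJ n * jacobian f z = symplJ r)
    (H : (Fin n ⊕ Fin n → ℝ) → ℝ) (hH : ContDiff ℝ 1 H)
    (z : Fin r ⊕ Fin r → ℝ) :
    ((symplJ r)ᵀ * (jacobian f z)ᵀ * symplJ n) *ᵥ (symplJ n *ᵥ grad H (f z)) =
      symplJ r *ᵥ grad (H ∘ f) z :=
  SMG_projection_is_Hamiltonian_general n r f hf H hH z
end
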